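/- arXiv:2210.04850 — 8 statements merged into one kernel-verified Lean document; each statement's English description precedes it below -/
import Mathlib

section
/- Let F(t)=t^3, G(t)=t, H(t)=1-(1-t)^{1/3} be distribution functions on [0,1]. Then R_{FG}(t)=G^{-1}(F(t)) and R_{GH}(t)=H^{-1}(G(t)) both have nonnegative third derivative on (0,1), but R_{FH}(t)=H^{-1}(F(t)) satisfies R_{FH}'''(t) = 18(28t^6 - 20t^3 + 1), which is negative for some t in (0,1). Hence the order ≤₃ (defined by third derivative of G^{-1}∘F being nonnegative) is not transitive. -/
/-! The three transforms are polynomials, so their third derivatives can be computed in `ℝ[X]`.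
Although `R_{FG}''' = R_{GH}''' = 6`, the chain rule for `R_{FH} = R_{GH} ∘ R_{FG}` contains the
cross term `3 R_{GH}''(R_{FG}) R_{FG}' R_{FG}'' = -324 t³ (1 - t³)`, negative because `R_{GH}` is
concave, and it dominates near `t = 0.7`. -/

open Polynomial

theorem deriv_deriv_deriv_eval {𝕜 : Type*} [NontriviallyNormedField 𝕜]
    (p : 𝕜[X]) (x : 𝕜) :
    deriv (deriv (deriv fun x => p.eval x)) x =
      (derivative (derivative (derivative p))).eval x := by
  simp only [funext fun y => p.deriv (x := y), funext fun y => (derivative p).deriv (x := y),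
    Polynomial.deriv]

theorem deriv_deriv_deriv_pow_three (t : ℝ) :
    deriv (deriv (deriv fun s : ℝ => s ^ 3)) t = 6 := by
  rw [show (fun s : ℝ => s ^ 3) = fun s => (X ^ 3 : ℝ[X]).eval s by simp,
    deriv_deriv_deriv_eval]
  simp only [derivative_pow, derivative_X, derivative_mul, derivative_C, derivative_zero,
    derivative_add, eval_add, eval_mul, eval_C, eval_one, eval_pow, eval_X, eval_zero]
  norm_num

theorem deriv_deriv_deriv_one_sub_one_sub_pow_three (t : ℝ) :
    deriv (deriv (deriv fun s : ℝ => 1 - (1 - s) ^ 3)) t = 6 := by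
  rw [show (fun s : ℝ => 1 - (1 - s) ^ 3) = fun s => (1 - (1 - X) ^ 3 : ℝ[X]).eval s by simp,
    deriv_deriv_deriv_eval]
  simp only [derivative_sub, derivative_one, derivative_pow, derivative_X, derivative_mul,
    derivative_C, derivative_zero, derivative_add, eval_add, eval_sub, eval_mul, eval_C, eval_one,
    eval_pow, eval_X, eval_zero]
  norm_num

theorem deriv_deriv_deriv_one_sub_one_sub_pow_three_comp_pow_three (t : ℝ) :
    deriv (deriv (deriv fun s : ℝ => 1 - (1 - s ^ 3) ^ 3)) t =
      18 * (28 * t ^ 6 - 20 * t ^ 3 + 1) := by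
  rw [show (fun s : ℝ => 1 - (1 - s ^ 3) ^ 3) = fun s => (1 - (1 - X ^ 3) ^ 3 : ℝ[X]).eval s by
      simp,
    deriv_deriv_deriv_eval]
  simp only [derivative_sub, derivative_one, derivative_pow, derivative_X, derivative_mul,
    derivative_C, derivative_zero, derivative_add, eval_add, eval_sub, eval_mul, eval_C, eval_one,
    eval_pow, eval_X, eval_zero]
  norm_num
  ring

theorem one_sub_one_sub_one_sub_pow_three_rpow_one_div_three {u : ℝ} (hu : u ≤ 1) :
    1 - (1 - (1 - (1 - u) ^ 3)) ^ ((1 : ℝ) / 3) = u := by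
  rw [sub_sub_cancel, ← Real.rpow_natCast, ← Real.rpow_mul (by linarith)]
  norm_num

/-- With `F t = t³`, `G t = t`, `H t = 1 - (1-t)^{1/3}` on `[0,1]`,
we have `H⁻¹ u = 1 - (1-u)³` (verified below), `R_{FG} t = G⁻¹(F t) = t³`,
`R_{GH} t = H⁻¹(G t) = 1 - (1-t)³` and `R_{FH} t = H⁻¹(F t) = 1 - (1-t³)³`.
Both `R_{FG}` and `R_{GH}` have nonnegative third derivative on `(0,1)`, but
`R_{FH}''' t = 18(28t⁶ - 20t³ + 1)` is negative somewhere in `(0,1)`: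
the order `≤₃` is not transitive. -/
theorem stmt0 :
    -- H⁻¹(u) = 1 - (1-u)³, i.e. H (1 - (1-u)³) = u on [0,1]
    (∀ u ∈ Set.Icc (0:ℝ) 1,
      1 - (1 - (1 - (1-u)^3)) ^ ((1:ℝ)/3) = u) ∧
    -- F ≤₃ G : R_{FG}(t) = G⁻¹(F t) = t³ has nonnegative third derivative
    (∀ t ∈ Set.Ioo (0:ℝ) 1,
      0 ≤ deriv (deriv (deriv (fun s : ℝ => s^3))) t) ∧
    -- G ≤₃ H : R_{GH}(t) = H⁻¹(G t) = 1 - (1-t)³ has nonnegative third derivative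
    (∀ t ∈ Set.Ioo (0:ℝ) 1,
      0 ≤ deriv (deriv (deriv (fun s : ℝ => 1 - (1-s)^3))) t) ∧
    -- but R_{FH}(t) = H⁻¹(F t) = 1 - (1-t³)³ has third derivative 18(28t⁶-20t³+1)
    (∀ t ∈ Set.Ioo (0:ℝ) 1,
      deriv (deriv (deriv (fun s : ℝ => 1 - (1-s^3)^3))) t
        = 18*(28*t^6 - 20*t^3 + 1)) ∧
    -- which is negative somewhere in (0,1): F ≤₃ H fails
    (∃ t ∈ Set.Ioo (0:ℝ) 1,
      deriv (deriv (deriv (fun s : ℝ => 1 - (1-s^3)^3))) t < 0) := by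
  refine ⟨fun u hu => one_sub_one_sub_one_sub_pow_three_rpow_one_div_three hu.2,
    fun t _ => ?_, fun t _ => ?_,
    fun t _ => deriv_deriv_deriv_one_sub_one_sub_pow_three_comp_pow_three t,
    ⟨7 / 10, by norm_num, ?_⟩⟩
  · rw [deriv_deriv_deriv_pow_three]; norm_num
  · rw [deriv_deriv_deriv_one_sub_one_sub_pow_three]; norm_num
  · rw [deriv_deriv_deriv_one_sub_one_sub_pow_three_comp_pow_three]; norm_num
end

section
/- Let F, G, H be three times differentiable distribution functions with strictly positive densities on the interiors of their supports, with F ≤₃ G and G ≤₃ H. If there exists p₀ ∈ (0,1) such that R_{FG}''(t) ≤ 0 for t ≤ F^{-1}(p₀), R_{FG}''(t) ≥ 0 for t ≥ F^{-1}(p₀), R_{GH}''(s) ≤ 0 for s ≤ G^{-1}(p₀), and R_{GH}''(s) ≥ 0 for s ≥ G^{-1}(p₀), then F ≤₃ H. -/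
/-- A three times differentiable distribution function with interval support
and strictly positive density on the interior `D` of its support, together
with its inverse (= quantile function) `inv : (0,1) → D`. -/
structure CDF where
  /-- the distribution function -/
  F : ℝ → ℝ
  /-- the interior of the support, an open interval -/
  D : Set ℝ
  /-- the inverse (quantile) function -/
  inv : ℝ → ℝ
  isOpen : IsOpen D
  ordConn : D.OrdConnected
  nonempty : D.Nonempty
  smooth : ContDiffOn ℝ 3 F D
  smooth_inv : ContDiffOn ℝ 3 inv (Set.Ioo 0 1)
  density_pos : ∀ x ∈ D, 0 < deriv F x
  mapsTo : Set.MapsTo F D (Set.Ioo 0 1)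
  inv_mapsTo : Set.MapsTo inv (Set.Ioo 0 1) D
  left_inv : ∀ x ∈ D, inv (F x) = x
  right_inv : ∀ p ∈ Set.Ioo (0:ℝ) 1, F (inv p) = p

/-- `R_{FG} = G⁻¹ ∘ F`. -/
def R (F G : CDF) : ℝ → ℝ := fun x => G.inv (F.F x)

/-- the kurtosis order `F ≤₃ G` : the third derivative of `R_{FG}` is
nonnegative on the interior of the support of `F`. -/
def le3 (F G : CDF) : Prop := ∀ t ∈ F.D, 0 ≤ deriv (deriv (deriv (R F G))) t

/-!
Write `f = R_{FG}` and `g = R_{GH}`, so that `R_{FH} = g ∘ f` on `D_F`. Of the three terms of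
`(g ∘ f)''' = g'''(f) f'³ + 3 g''(f) f' f'' + g'(f) f'''`, the outer two are nonnegative because
`f, g` are increasing and `F ≤₃ G`, `G ≤₃ H`. The middle one is nonnegative because `f` is increasing
and maps the inflection point `F⁻¹(p₀)` of `f` to the inflection point `G⁻¹(p₀)` of `g`, so
`g''(f t)` and `f''(t)` have the same sign.
-/

open Set Filter Topology

section ChainRule

variable {f g : ℝ → ℝ} {s u : Set ℝ}

lemma deriv_comp_eqOn (hs : IsOpen s) (hu : IsOpen u) (hmap : MapsTo f s u)
    (hf : DifferentiableOn ℝ f s) (hg : DifferentiableOn ℝ g u) :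
    EqOn (deriv (g ∘ f)) (fun x => deriv g (f x) * deriv f x) s := fun x hx =>
  deriv_comp x (hg.differentiableAt (hu.mem_nhds (hmap hx))) (hf.differentiableAt (hs.mem_nhds hx))

lemma deriv_deriv_comp_eqOn (hs : IsOpen s) (hu : IsOpen u) (hmap : MapsTo f s u)
    (hf : ContDiffOn ℝ 2 f s) (hg : ContDiffOn ℝ 2 g u) :
    EqOn (deriv (deriv (g ∘ f)))
      (fun x => deriv (deriv g) (f x) * deriv f x ^ 2 + deriv g (f x) * deriv (deriv f) x) s := by
  intro x hx
  have hf' := hf.deriv_of_isOpen hs (m := 1) (by norm_num)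
  have hg' := hg.deriv_of_isOpen hu (m := 1) (by norm_num)
  have hd := deriv_comp_eqOn hs hu hmap (hf.differentiableOn (by norm_num))
    (hg.differentiableOn (by norm_num))
  have hfx := (hf.differentiableOn (by norm_num)).differentiableAt (hs.mem_nhds hx)
  have hf'x := (hf'.differentiableOn (by norm_num)).differentiableAt (hs.mem_nhds hx)
  have hg'x := (hg'.differentiableOn (by norm_num)).differentiableAt (hu.mem_nhds (hmap hx))
  rw [(eventuallyEq_of_mem (hs.mem_nhds hx) hd).deriv_eq]
  refine (((hg'x.hasDerivAt.comp x hfx.hasDerivAt).mul hf'x.hasDerivAt).deriv).trans ?_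
  simp only [Function.comp_apply]
  ring

lemma deriv_deriv_deriv_comp (hs : IsOpen s) (hu : IsOpen u) (hmap : MapsTo f s u)
    (hf : ContDiffOn ℝ 3 f s) (hg : ContDiffOn ℝ 3 g u) {x : ℝ} (hx : x ∈ s) :
    deriv (deriv (deriv (g ∘ f))) x =
      deriv (deriv (deriv g)) (f x) * deriv f x ^ 3
      + 3 * deriv (deriv g) (f x) * deriv f x * deriv (deriv f) x
      + deriv g (f x) * deriv (deriv (deriv f)) x := by
  have hf' := hf.deriv_of_isOpen hs (m := 2) (by norm_num)
  have hf'' := hf'.deriv_of_isOpen hs (m := 1) (by norm_num)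
  have hg' := hg.deriv_of_isOpen hu (m := 2) (by norm_num)
  have hg'' := hg'.deriv_of_isOpen hu (m := 1) (by norm_num)
  have hd := deriv_deriv_comp_eqOn hs hu hmap (hf.of_le (by norm_num)) (hg.of_le (by norm_num))
  have hfx := (hf.differentiableOn (by norm_num)).differentiableAt (hs.mem_nhds hx)
  have hf'x := (hf'.differentiableOn (by norm_num)).differentiableAt (hs.mem_nhds hx)
  have hf''x := (hf''.differentiableOn (by norm_num)).differentiableAt (hs.mem_nhds hx)
  have hg'x := (hg'.differentiableOn (by norm_num)).differentiableAt (hu.mem_nhds (hmap hx))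
  have hg''x := (hg''.differentiableOn (by norm_num)).differentiableAt (hu.mem_nhds (hmap hx))
  rw [(eventuallyEq_of_mem (hs.mem_nhds hx) hd).deriv_eq]
  refine ((((hg''x.hasDerivAt.comp x hfx.hasDerivAt).mul (hf'x.hasDerivAt.pow 2)).add
    ((hg'x.hasDerivAt.comp x hfx.hasDerivAt).mul hf''x.hasDerivAt)).deriv).trans ?_
  simp only [Function.comp_apply, Pi.pow_apply]
  ring

end ChainRule

namespace CDF

lemma differentiableAt (G : CDF) {x : ℝ} (hx : x ∈ G.D) : DifferentiableAt ℝ G.F x :=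
  (G.smooth.differentiableOn (by norm_num)).differentiableAt (G.isOpen.mem_nhds hx)

lemma differentiableAt_inv (G : CDF) {p : ℝ} (hp : p ∈ Ioo (0 : ℝ) 1) :
    DifferentiableAt ℝ G.inv p :=
  (G.smooth_inv.differentiableOn (by norm_num)).differentiableAt (isOpen_Ioo.mem_nhds hp)

lemma deriv_inv_pos (G : CDF) {p : ℝ} (hp : p ∈ Ioo (0 : ℝ) 1) : 0 < deriv G.inv p := by
  have hx : G.inv p ∈ G.D := G.inv_mapsTo hp
  have hid : G.F ∘ G.inv =ᶠ[𝓝 p] id := eventuallyEq_of_mem (isOpen_Ioo.mem_nhds hp) G.right_inv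
  have hprod : deriv G.F (G.inv p) * deriv G.inv p = 1 := by
    rw [← deriv_comp p (G.differentiableAt hx) (G.differentiableAt_inv hp), hid.deriv_eq, deriv_id]
  exact pos_of_mul_pos_right (hprod ▸ one_pos) (G.density_pos _ hx).le

end CDF

section

variable (F G H : CDF)

lemma R_contDiffOn : ContDiffOn ℝ 3 (R F G) F.D :=
  G.smooth_inv.comp F.smooth F.mapsTo

lemma R_mapsTo : MapsTo (R F G) F.D G.D :=
  fun _ ht => G.inv_mapsTo (F.mapsTo ht)

lemma R_inv {p : ℝ} (hp : p ∈ Ioo (0 : ℝ) 1) : R F G (F.inv p) = G.inv p := by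
  rw [R, F.right_inv p hp]

lemma R_eqOn_comp : EqOn (R F H) (R G H ∘ R F G) F.D := fun x hx => by
  simp only [R, Function.comp_apply, G.right_inv _ (F.mapsTo hx)]

lemma deriv_R_pos {t : ℝ} (ht : t ∈ F.D) : 0 < deriv (R F G) t := by
  rw [show R F G = G.inv ∘ F.F from rfl,
    deriv_comp t (G.differentiableAt_inv (F.mapsTo ht)) (F.differentiableAt ht)]
  exact mul_pos (G.deriv_inv_pos (F.mapsTo ht)) (F.density_pos _ ht)

lemma R_strictMonoOn : StrictMonoOn (R F G) F.D :=
  strictMonoOn_of_deriv_pos F.ordConn.convex (R_contDiffOn F G).continuousOn fun _ hx =>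
    deriv_R_pos F G (F.isOpen.interior_eq ▸ hx)

lemma deriv_deriv_deriv_R_comp {t : ℝ} (ht : t ∈ F.D) :
    deriv (deriv (deriv (R F H))) t =
      deriv (deriv (deriv (R G H))) (R F G t) * deriv (R F G) t ^ 3
      + 3 * deriv (deriv (R G H)) (R F G t) * deriv (R F G) t * deriv (deriv (R F G)) t
      + deriv (R G H) (R F G t) * deriv (deriv (deriv (R F G))) t := by
  rw [(eventuallyEq_of_mem (F.isOpen.mem_nhds ht) (R_eqOn_comp F G H)).deriv.deriv.deriv_eq]
  exact deriv_deriv_deriv_comp F.isOpen G.isOpen (R_mapsTo F G) (R_contDiffOn F G)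
    (R_contDiffOn G H) ht

end

variable {F G H : CDF}

lemma le3_trans_of_mul_nonneg (h1 : le3 F G) (h2 : le3 G H)
    (hmid : ∀ t ∈ F.D, 0 ≤ deriv (deriv (R G H)) (R F G t) * deriv (deriv (R F G)) t) :
    le3 F H := by
  intro t ht
  have hft : R F G t ∈ G.D := R_mapsTo F G ht
  have hf' := deriv_R_pos F G ht
  have hg' := deriv_R_pos G H hft
  rw [deriv_deriv_deriv_R_comp F G H ht]
  have := mul_nonneg (h2 _ hft) (pow_nonneg hf'.le 3)
  have := mul_nonneg hf'.le (hmid t ht)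
  have := mul_nonneg hg'.le (h1 t ht)
  linarith

/-- If `F ≤₃ G`, `G ≤₃ H` and there is a common inflection value
`p₀ ∈ (0,1)` (i.e. `R_{FG}''` changes sign from `-` to `+` at `F⁻¹(p₀)` and
`R_{GH}''` does so at `G⁻¹(p₀)`), then `F ≤₃ H`. -/
theorem stmt2 (F G H : CDF) (h1 : le3 F G) (h2 : le3 G H)
    (p₀ : ℝ) (hp₀ : p₀ ∈ Set.Ioo (0:ℝ) 1)
    (hFG1 : ∀ t ∈ F.D, t ≤ F.inv p₀ → deriv (deriv (R F G)) t ≤ 0)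
    (hFG2 : ∀ t ∈ F.D, F.inv p₀ ≤ t → 0 ≤ deriv (deriv (R F G)) t)
    (hGH1 : ∀ s ∈ G.D, s ≤ G.inv p₀ → deriv (deriv (R G H)) s ≤ 0)
    (hGH2 : ∀ s ∈ G.D, G.inv p₀ ≤ s → 0 ≤ deriv (deriv (R G H)) s) :
    le3 F H := by
  refine le3_trans_of_mul_nonneg h1 h2 fun t ht => ?_
  have hft := R_mapsTo F G ht
  have hc := F.inv_mapsTo hp₀
  have hmono := R_strictMonoOn F G
  rcases le_total t (F.inv p₀) with hle | hle
  · have hle' : R F G t ≤ G.inv p₀ := R_inv F G hp₀ ▸ (hmono.le_iff_le ht hc).mpr hle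
    exact mul_nonneg_of_nonpos_of_nonpos (hGH1 _ hft hle') (hFG1 t ht hle)
  · have hle' : G.inv p₀ ≤ R F G t := R_inv F G hp₀ ▸ (hmono.le_iff_le hc ht).mpr hle
    exact mul_nonneg (hGH2 _ hft hle') (hFG2 t ht hle)
end

section
/- Let F, G be three times differentiable distribution functions with strictly positive densities on the interiors of their supports. If F ≤₃ G, then for every α ∈ (0, 1/2), G^{-1}(1-α) − 3G^{-1}(η_F(1-α)) + 3G^{-1}(η_F(α)) − G^{-1}(α) ≥ 0, where η_F(q) = F((2/3)F^{-1}(q) + (1/3)F^{-1}(1-q)). -/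
/-!
Write `a = F⁻¹(α)`, `b = F⁻¹(1-α)` and `d = (b - a)/3`. The four quantiles are `R_{FG}` at
`a, a + d, a + 2d, a + 3d`, so the expression is the third forward difference `Δ_d³ R_{FG}(a)`.
As `R''' ≥ 0`, `R''` is monotone, hence `Δ_d R'` is monotone; it is the derivative of `Δ_d R`,
which is therefore convex, and `Δ_d³ R = Δ_d² (Δ_d R)` is a second difference of a convex function.
-/

open Set

open scoped fwdDiff

theorem HasDerivAt.fwdDiff {f : ℝ → ℝ} {f₀ f₁ h x : ℝ} (h₀ : HasDerivAt f f₀ x)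
    (h₁ : HasDerivAt f f₁ (x + h)) : HasDerivAt (Δ_[h] f) (f₁ - f₀) x :=
  (h₁.comp_add_const x h).sub h₀

section Convex

variable {s : Set ℝ} {h : ℝ}

theorem IsOpen.inter_preimage_add_const (hs : IsOpen s) : IsOpen (s ∩ (· + h) ⁻¹' s) :=
  hs.inter (hs.preimage (continuous_add_const h))

theorem Convex.inter_preimage_add_const (hs : Convex ℝ s) : Convex ℝ (s ∩ (· + h) ⁻¹' s) :=
  hs.inter (hs.translate_preimage_left h)

theorem hasDerivAt_fwdDiff {f : ℝ → ℝ} (hs : IsOpen s) (hf : DifferentiableOn ℝ f s) {x : ℝ}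
    (hx : x ∈ s ∩ (· + h) ⁻¹' s) : HasDerivAt (Δ_[h] f) (Δ_[h] (deriv f) x) x :=
  ((hf.differentiableAt (hs.mem_nhds hx.1)).hasDerivAt).fwdDiff
    (hf.differentiableAt (hs.mem_nhds hx.2)).hasDerivAt

theorem monotoneOn_fwdDiff_of_monotoneOn_deriv {g : ℝ → ℝ} (hs : IsOpen s) (hs' : Convex ℝ s)
    (hg : DifferentiableOn ℝ g s) (hg' : MonotoneOn (deriv g) s) (hh : 0 ≤ h) :
    MonotoneOn (Δ_[h] g) (s ∩ (· + h) ⁻¹' s) := by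
  have hderiv : ∀ x ∈ s ∩ (· + h) ⁻¹' s, HasDerivAt (Δ_[h] g) (Δ_[h] (deriv g) x) x :=
    fun x hx => hasDerivAt_fwdDiff hs hg hx
  refine monotoneOn_of_deriv_nonneg hs'.inter_preimage_add_const
    (fun x hx => (hderiv x hx).continuousAt.continuousWithinAt)
    (fun x hx => (hderiv x (interior_subset hx)).differentiableAt.differentiableWithinAt)
    (fun x hx => ?_)
  rw [hs.inter_preimage_add_const.interior_eq] at hx
  rw [(hderiv x hx).deriv]
  exact sub_nonneg.2 (hg' hx.1 hx.2 (le_add_of_nonneg_right hh))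

theorem convexOn_fwdDiff_of_monotoneOn_deriv2 {f : ℝ → ℝ} (hs : IsOpen s) (hs' : Convex ℝ s)
    (hf : DifferentiableOn ℝ f s) (hf' : DifferentiableOn ℝ (deriv f) s)
    (hf'' : MonotoneOn (deriv (deriv f)) s) (hh : 0 ≤ h) :
    ConvexOn ℝ (s ∩ (· + h) ⁻¹' s) (Δ_[h] f) := by
  have hderiv : ∀ x ∈ s ∩ (· + h) ⁻¹' s, HasDerivAt (Δ_[h] f) (Δ_[h] (deriv f) x) x :=
    fun x hx => hasDerivAt_fwdDiff hs hf hx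
  refine MonotoneOn.convexOn_of_deriv hs'.inter_preimage_add_const
    (fun x hx => (hderiv x hx).continuousAt.continuousWithinAt) ?_ ?_ <;>
    rw [hs.inter_preimage_add_const.interior_eq]
  · exact fun x hx => (hderiv x hx).differentiableAt.differentiableWithinAt
  · exact (monotoneOn_fwdDiff_of_monotoneOn_deriv hs hs' hf' hf'' hh).congr
      fun x hx => (hderiv x hx).deriv.symm

end Convex

theorem fwdDiff_iter_two_apply (f : ℝ → ℝ) (h x : ℝ) :
    (Δ_[h])^[2] f x = f (x + 2 * h) - 2 * f (x + h) + f x := by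
  simp only [Function.iterate_succ_apply', Function.iterate_zero_apply, fwdDiff]
  ring_nf

theorem fwdDiff_iter_three_apply (f : ℝ → ℝ) (h x : ℝ) :
    (Δ_[h])^[3] f x = f (x + 3 * h) - 3 * f (x + 2 * h) + 3 * f (x + h) - f x := by
  simp only [Function.iterate_succ_apply', Function.iterate_zero_apply, fwdDiff]
  ring_nf

theorem ConvexOn.fwdDiff_iter_two_nonneg {s : Set ℝ} {g : ℝ → ℝ} (hg : ConvexOn ℝ s g) {h x : ℝ}
    (hx : x ∈ s) (hx' : x + 2 * h ∈ s) : 0 ≤ (Δ_[h])^[2] g x := by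
  have hmid := hg.2 hx hx' (by norm_num : (0:ℝ) ≤ 1/2) (by norm_num : (0:ℝ) ≤ 1/2) (by norm_num)
  simp only [smul_eq_mul] at hmid
  rw [show 1/2 * x + 1/2 * (x + 2 * h) = x + h by ring] at hmid
  rw [fwdDiff_iter_two_apply]
  linarith

theorem fwdDiff_iter_three_nonneg {s : Set ℝ} {f : ℝ → ℝ} (hs : IsOpen s) (hs' : Convex ℝ s)
    (hf : ContDiffOn ℝ 3 f s) (hf''' : ∀ x ∈ s, 0 ≤ deriv (deriv (deriv f)) x) {h a : ℝ}
    (hh : 0 ≤ h) (ha : a ∈ s) (ha' : a + 3 * h ∈ s) : 0 ≤ (Δ_[h])^[3] f a := by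
  have hf' : ContDiffOn ℝ 2 (deriv f) s := hf.deriv_of_isOpen hs (by norm_num)
  have hf'' : ContDiffOn ℝ 1 (deriv (deriv f)) s := hf'.deriv_of_isOpen hs (by norm_num)
  have hmono : MonotoneOn (deriv (deriv f)) s :=
    monotoneOn_of_deriv_nonneg hs' hf''.continuousOn
      (by rw [hs.interior_eq]; exact hf''.differentiableOn one_ne_zero)
      (by rw [hs.interior_eq]; exact hf''')
  have hconv := convexOn_fwdDiff_of_monotoneOn_deriv2 hs hs' (hf.differentiableOn (by norm_num))
    (hf'.differentiableOn (by norm_num)) hmono hh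
  have hsub : Icc a (a + 3 * h) ⊆ s := hs'.ordConnected.out ha ha'
  rw [Function.iterate_succ_apply]
  refine hconv.fwdDiff_iter_two_nonneg ⟨ha, hsub ⟨?_, ?_⟩⟩ ⟨hsub ⟨?_, ?_⟩, hsub ⟨?_, ?_⟩⟩ <;>
    linarith

namespace CDF

variable (F G : CDF)

theorem strictMonoOn : StrictMonoOn F.F F.D := by
  have hD : Convex ℝ F.D := convex_iff_ordConnected.2 F.ordConn
  exact strictMonoOn_of_deriv_pos hD F.smooth.continuousOn
    fun x hx => F.density_pos x (interior_subset hx)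

theorem inv_lt_inv {p q : ℝ} (hp : p ∈ Ioo 0 1) (hq : q ∈ Ioo 0 1) (hpq : p < q) :
    F.inv p < F.inv q := by
  rwa [← F.strictMonoOn.lt_iff_lt (F.inv_mapsTo hp) (F.inv_mapsTo hq), F.right_inv p hp,
    F.right_inv q hq]

theorem contDiffOn_R : ContDiffOn ℝ 3 (R F G) F.D :=
  G.smooth_inv.comp F.smooth F.mapsTo

theorem R_apply_inv {p : ℝ} (hp : p ∈ Ioo 0 1) : R F G (F.inv p) = G.inv p := by
  rw [R, F.right_inv p hp]

end CDF

/-- If `F ≤₃ G`, then for every `α ∈ (0, 1/2)`,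
`G⁻¹(1-α) - 3 G⁻¹(η_F(1-α)) + 3 G⁻¹(η_F(α)) - G⁻¹(α) ≥ 0`, where
`η_F(q) = F((2/3) F⁻¹(q) + (1/3) F⁻¹(1-q))`. -/
theorem stmt4 (F G : CDF) (h : le3 F G) (α : ℝ) (hα : α ∈ Set.Ioo (0:ℝ) (1/2)) :
    0 ≤ G.inv (1-α)
        - 3 * G.inv (F.F ((2/3) * F.inv (1-α) + (1/3) * F.inv α))
        + 3 * G.inv (F.F ((2/3) * F.inv α + (1/3) * F.inv (1-α)))
        - G.inv α := by
  obtain ⟨hα0, hα2⟩ := hα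
  have hα1 : α ∈ Ioo (0:ℝ) 1 := ⟨hα0, by linarith⟩
  have hα1' : 1 - α ∈ Ioo (0:ℝ) 1 := ⟨by linarith, by linarith⟩
  set a := F.inv α
  set b := F.inv (1 - α)
  have hab : a < b := F.inv_lt_inv hα1 hα1' (by linarith)
  have hb : a + 3 * ((b - a) / 3) = b := by ring
  have key := fwdDiff_iter_three_nonneg F.isOpen (convex_iff_ordConnected.2 F.ordConn)
    (F.contDiffOn_R G) h (h := (b - a) / 3) (by linarith) (F.inv_mapsTo hα1)
    (by rw [hb]; exact F.inv_mapsTo hα1')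
  rw [fwdDiff_iter_three_apply, hb, show a + 2 * ((b - a) / 3) = 2 / 3 * b + 1 / 3 * a by ring,
    show a + (b - a) / 3 = 2 / 3 * a + 1 / 3 * b by ring, F.R_apply_inv G hα1, F.R_apply_inv G hα1'] at key
  exact key
end

section
/- A continuous function h: (a,b) → ℝ is nondecreasing if and only if for every c ∈ ℝ there exists x₀ ∈ [a,b] such that h(x) ≤ c for all x ∈ (a, x₀) and h(x) ≥ c for all x ∈ (x₀, b). -/
/-- A continuous function `h` on a nonempty open interval
`(a,b)` (endpoints in `EReal`, so possibly unbounded) is nondecreasing iff for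
every level `c ∈ ℝ` there is a crossing point `x₀ ∈ [a,b]` with `h ≤ c`
before `x₀` and `h ≥ c` after `x₀`. -/
theorem stmt10 (a b : EReal) (hab : a < b) (h : ℝ → ℝ)
    (hcont : ContinuousOn h {x : ℝ | a < (x : EReal) ∧ (x : EReal) < b}) :
    MonotoneOn h {x : ℝ | a < (x : EReal) ∧ (x : EReal) < b} ↔
      ∀ c : ℝ, ∃ x₀ ∈ Set.Icc a b,
        ∀ x : ℝ, a < (x : EReal) → (x : EReal) < b →
          ((x : EReal) < x₀ → h x ≤ c) ∧ (x₀ < (x : EReal) → c ≤ h x) := by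
  constructor
  · intro hm c
    by_cases H : ∀ x : ℝ, a < (x : EReal) → (x : EReal) < b → h x ≤ c
    · exact ⟨b, ⟨hab.le, le_refl b⟩, fun x hx1 hx2 =>
        ⟨fun _ => H x hx1 hx2, fun hlt => absurd (hlt.trans hx2) (lt_irrefl b)⟩⟩
    · push_neg at H
      obtain ⟨y, hy1, hy2, hyc⟩ := H
      set T : Set EReal :=
        {e : EReal | ∃ t : ℝ, e = (t : EReal) ∧ a < (t : EReal) ∧ (t : EReal) < b ∧ c ≤ h t}
        with hT
      have hyT : ((y : ℝ) : EReal) ∈ T := ⟨y, rfl, hy1, hy2, hyc.le⟩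
      refine ⟨sInf T, ⟨le_sInf ?_, sInf_le_of_le hyT hy2.le⟩, ?_⟩
      · rintro e ⟨t, rfl, ht1, _, _⟩; exact ht1.le
      · intro x hx1 hx2
        constructor
        · intro hlt
          by_contra hc
          push_neg at hc
          have hxT : (x : EReal) ∈ T := ⟨x, rfl, hx1, hx2, hc.le⟩
          exact absurd (sInf_le hxT) (not_le.2 hlt)
        · intro hlt
          obtain ⟨e, he, hex⟩ := sInf_lt_iff.1 hlt
          obtain ⟨t, rfl, ht1, ht2, htc⟩ := he
          have htx : t ≤ x := (EReal.coe_lt_coe_iff.1 hex).le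
          exact htc.trans (hm ⟨ht1, ht2⟩ ⟨hx1, hx2⟩ htx)
  · intro H x hx y hy hxy
    by_contra hc
    push_neg at hc
    obtain ⟨x₀, _, hx₀⟩ := H ((h x + h y) / 2)
    have h1 := (hx₀ x hx.1 hx.2).1
    have h2 := (hx₀ y hy.1 hy.2).2
    have hx0x : x₀ ≤ (x : EReal) := by
      by_contra h'
      push_neg at h'
      linarith [h1 h']
    have hyx0 : (y : EReal) ≤ x₀ := by
      by_contra h'
      push_neg at h'
      linarith [h2 h']
    have hyx : y ≤ x := EReal.coe_le_coe_iff.1 (hyx0.trans hx0x)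
    have hxy' : x = y := le_antisymm hxy hyx
    rw [hxy'] at hc
    exact lt_irrefl _ hc
end

section
/- Let F(t)=t³ and G(t)=t on [0,1], and for c > 0 let H_c(t) = 1 − ((c−t)/c)^{1/3} on [0,c]. Then F ≤₃ G and G ≤₃ H_c (indeed R_{GH_c}'''(t) = 6c ≥ 0), but R_{FH_c}''(t) = 18c(4t⁷ − 5t⁴ + t), which is positive on (0, 2^{-2/3}) and negative on (2^{-2/3}, 1). Consequently, for every t₀ ∈ ℝ there exists c > 0 such that F ≤_{gs}^{t₀} G and G ≤_{gs}^{t₀} H_c hold but F ≤_{gs}^{t₀} H_c fails; in particular the order ≤_{gs}^{t₀} is not transitive. -/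
/-!
`R_{FG}'' = 6t` and `R_{GH_c}'' = 6c(t - 1)` are increasing, and an increasing `R''` crosses
every level `t₀` at most once, from below, so it satisfies `≤_{gs}^{t₀}`. On the other hand
`R_{FH_c}'' = 18c · t(1 - 4t³)(1 - t³)` changes sign from `+` to `-` at `t = 2^{-2/3}`; for `c`
large it lies above `t₀` at `t = 1/2` and below `t₀` at `t = 9/10`, which no crossing point
can accommodate.
-/

/-- `F ≤_{gs}^{t₀} G` for distributions supported on `(0,1)`: there is a
crossing point `x₀ = F⁻¹(p)`, `p ∈ [0,1]` (so `x₀ ∈ [0,1]`), with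
`R_{FG}'' ≤ t₀` to its left and `R_{FG}'' ≥ t₀` to its right. -/
def gsOrd (RFG : ℝ → ℝ) (t₀ : ℝ) : Prop :=
  ∃ x₀ ∈ Set.Icc (0:ℝ) 1,
    (∀ t ∈ Set.Ioo (0:ℝ) 1, t < x₀ → deriv (deriv RFG) t ≤ t₀) ∧
    (∀ t ∈ Set.Ioo (0:ℝ) 1, x₀ < t → t₀ ≤ deriv (deriv RFG) t)

open Set

theorem gsOrd_of_monotoneOn {R : ℝ → ℝ} (t₀ : ℝ) (hR : MonotoneOn (deriv (deriv R)) (Ioo 0 1)) :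
    gsOrd R t₀ := by
  set S : Set ℝ := insert 0 {t | t ∈ Ioo 0 1 ∧ deriv (deriv R) t ≤ t₀}
  have hS : ∀ s ∈ S, s ≤ 1 := by
    rintro s (rfl | ⟨hs, -⟩)
    exacts [zero_le_one, hs.2.le]
  have hbdd : BddAbove S := ⟨1, hS⟩
  refine ⟨sSup S, ⟨le_csSup hbdd (mem_insert 0 _), csSup_le (insert_nonempty 0 _) hS⟩, ?_, ?_⟩
  · intro t ht hlt
    obtain ⟨s, hs, hts⟩ := exists_lt_of_lt_csSup (insert_nonempty 0 _) hlt
    rcases hs with rfl | ⟨hs, hst₀⟩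
    · exact absurd ht.1 hts.not_gt
    · exact (hR ht hs hts.le).trans hst₀
  · intro t ht hlt
    by_contra! h
    exact hlt.not_ge (le_csSup hbdd (Or.inr ⟨ht, h.le⟩))

theorem not_gsOrd_of_lt_of_lt {R : ℝ → ℝ} {t₀ p q : ℝ} (hp : p ∈ Ioo 0 1) (hq : q ∈ Ioo 0 1)
    (hpq : p < q) (hRp : t₀ < deriv (deriv R) p) (hRq : deriv (deriv R) q < t₀) :
    ¬ gsOrd R t₀ := by
  rintro ⟨x₀, -, hleft, hright⟩
  rcases lt_or_ge p x₀ with hpx | hxp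
  · exact (hleft p hp hpx).not_gt hRp
  · exact (hright q hq (hxp.trans_lt hpq)).not_gt hRq

lemma deriv_deriv_cube : deriv (deriv fun s : ℝ => s ^ 3) = fun s => 6 * s := by
  have h : deriv (fun s : ℝ => s ^ 3) = fun s => 3 * s ^ 2 :=
    deriv_eq fun x => (hasDerivAt_pow 3 x).congr_deriv (by push_cast; ring)
  rw [h]
  exact deriv_eq fun x => ((hasDerivAt_pow 2 x).const_mul 3).congr_deriv (by push_cast; ring)

lemma deriv_deriv_RGH (c : ℝ) :
    deriv (deriv fun s : ℝ => c * (1 - (1 - s) ^ 3)) = fun s => 6 * c * (s - 1) := by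
  have h : deriv (fun s : ℝ => c * (1 - (1 - s) ^ 3)) = fun s => 3 * c * (1 - s) ^ 2 :=
    deriv_eq fun x =>
      (((((hasDerivAt_id x).const_sub 1).pow 3).const_sub 1).const_mul c).congr_deriv
        (by push_cast [id]; ring)
  rw [h]
  exact deriv_eq fun x =>
    ((((hasDerivAt_id x).const_sub 1).pow 2).const_mul (3 * c)).congr_deriv
      (by push_cast [id]; ring)

lemma deriv_deriv_RFH (c : ℝ) :
    deriv (deriv fun s : ℝ => c * (1 - (1 - s ^ 3) ^ 3)) =
      fun s => 18 * c * (4 * s ^ 7 - 5 * s ^ 4 + s) := by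
  have h : deriv (fun s : ℝ => c * (1 - (1 - s ^ 3) ^ 3)) =
      fun s => 9 * c * s ^ 2 * (1 - s ^ 3) ^ 2 :=
    deriv_eq fun x =>
      (((((hasDerivAt_pow 3 x).const_sub 1).pow 3).const_sub 1).const_mul c).congr_deriv
        (by push_cast [id]; ring)
  rw [h]
  exact deriv_eq fun x => (((hasDerivAt_pow 2 x).const_mul (9 * c)).mul
    (((hasDerivAt_pow 3 x).const_sub 1).pow 2)).congr_deriv
      (by push_cast [Pi.pow_apply]; ring)

lemma two_rpow_neg_two_thirds_pow_three : ((2 : ℝ) ^ (-(2 : ℝ) / 3)) ^ 3 = 1 / 4 := by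
  rw [← Real.rpow_natCast, ← Real.rpow_mul zero_le_two]
  norm_num

lemma factor_RFH_deriv_deriv (t : ℝ) :
    4 * t ^ 7 - 5 * t ^ 4 + t = t * (1 - 4 * t ^ 3) * (1 - t ^ 3) := by
  ring

lemma RFH_deriv_deriv_pos {t : ℝ} (h0 : 0 < t) (ht : t < (2 : ℝ) ^ (-(2 : ℝ) / 3)) :
    0 < 4 * t ^ 7 - 5 * t ^ 4 + t := by
  have hcube : t ^ 3 < 1 / 4 := two_rpow_neg_two_thirds_pow_three ▸
    pow_lt_pow_left₀ ht h0.le three_ne_zero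
  rw [factor_RFH_deriv_deriv]
  exact mul_pos (mul_pos h0 (by linarith)) (by linarith)

lemma RFH_deriv_deriv_neg {t : ℝ} (ht : (2 : ℝ) ^ (-(2 : ℝ) / 3) < t) (h1 : t < 1) :
    4 * t ^ 7 - 5 * t ^ 4 + t < 0 := by
  have h0 : 0 < t := (Real.rpow_pos_of_pos two_pos _).trans ht
  have hcube : 1 / 4 < t ^ 3 := two_rpow_neg_two_thirds_pow_three ▸
    pow_lt_pow_left₀ ht (Real.rpow_nonneg zero_le_two _) three_ne_zero
  have hcube1 : t ^ 3 < 1 := pow_lt_one₀ h0.le h1 three_ne_zero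
  rw [factor_RFH_deriv_deriv]
  exact mul_neg_of_neg_of_pos (mul_neg_of_pos_of_neg h0 (by linarith)) (by linarith)

/-- With `F t = t³`, `G t = t` on `[0,1]` and
`H_c t = 1 - ((c-t)/c)^{1/3}` on `[0,c]` (so `H_c⁻¹ u = c(1-(1-u)³)`,
`R_{GH_c} t = c(1-(1-t)³)`, `R_{FH_c} t = c(1-(1-t³)³)`): `F ≤₃ G` and
`G ≤₃ H_c` (indeed `R_{GH_c}''' = 6c ≥ 0`), but
`R_{FH_c}'' t = 18c(4t⁷ - 5t⁴ + t)` is positive on `(0, 2^{-2/3})` and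
negative on `(2^{-2/3}, 1)`. Consequently for every `t₀ ∈ ℝ` there is `c > 0`
with `F ≤_{gs}^{t₀} G`, `G ≤_{gs}^{t₀} H_c` but not `F ≤_{gs}^{t₀} H_c`;
in particular `≤_{gs}^{t₀}` is not transitive. -/
theorem stmt11 :
    (∀ c : ℝ, 0 < c →
      -- H_c⁻¹(u) = c(1-(1-u)³): H_c (c*(1-(1-u)³)) = u on [0,1]
      (∀ u ∈ Set.Icc (0:ℝ) 1,
        1 - ((c - c*(1-(1-u)^3))/c) ^ ((1:ℝ)/3) = u) ∧
      -- F ≤₃ G: R_{FG} t = t³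
      (∀ t ∈ Set.Ioo (0:ℝ) 1,
        0 ≤ deriv (deriv (deriv (fun s : ℝ => s^3))) t) ∧
      -- G ≤₃ H_c: R_{GH_c}''' = 6c
      (∀ t ∈ Set.Ioo (0:ℝ) 1,
        deriv (deriv (deriv (fun s : ℝ => c*(1-(1-s)^3))) ) t = 6*c) ∧
      -- R_{FH_c}'' t = 18c(4t⁷ - 5t⁴ + t)
      (∀ t ∈ Set.Ioo (0:ℝ) 1,
        deriv (deriv (fun s : ℝ => c*(1-(1-s^3)^3))) t
          = 18*c*(4*t^7 - 5*t^4 + t)) ∧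
      (∀ t ∈ Set.Ioo (0:ℝ) ((2:ℝ) ^ (-(2:ℝ)/3)),
        0 < 18*c*(4*t^7 - 5*t^4 + t)) ∧
      (∀ t ∈ Set.Ioo ((2:ℝ) ^ (-(2:ℝ)/3)) 1,
        18*c*(4*t^7 - 5*t^4 + t) < 0)) ∧
    -- non-transitivity of ≤_{gs}^{t₀} for every threshold t₀
    (∀ t₀ : ℝ, ∃ c : ℝ, 0 < c ∧
      gsOrd (fun s : ℝ => s^3) t₀ ∧
      gsOrd (fun s : ℝ => c*(1-(1-s)^3)) t₀ ∧
      ¬ gsOrd (fun s : ℝ => c*(1-(1-s^3)^3)) t₀) := by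
  refine ⟨fun c hc => ⟨fun u hu => ?_, fun t _ => ?_, fun t _ => ?_, fun t _ => ?_,
    fun t ht => ?_, fun t ht => ?_⟩, fun t₀ => ?_⟩
  · have hcube : (c - c * (1 - (1 - u) ^ 3)) / c = (1 - u) ^ 3 := by field_simp; ring
    have hroot : ((1 - u) ^ 3) ^ ((1 : ℝ) / 3) = 1 - u := by
      rw [one_div]; exact_mod_cast Real.pow_rpow_inv_natCast (by linarith [hu.2]) three_ne_zero
    rw [hcube, hroot]; ring
  · rw [deriv_deriv_cube]; simp
  · rw [deriv_deriv_RGH]; simp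
  · rw [deriv_deriv_RFH]
  · exact mul_pos (by positivity) (RFH_deriv_deriv_pos ht.1 ht.2)
  · exact mul_neg_of_pos_of_neg (by positivity) (RFH_deriv_deriv_neg ht.1 ht.2)
  · have habs := abs_nonneg t₀
    refine ⟨|t₀| + 1, by positivity, gsOrd_of_monotoneOn t₀ ?_, gsOrd_of_monotoneOn t₀ ?_,
      not_gsOrd_of_lt_of_lt (p := 1 / 2) (q := 9 / 10) (by norm_num) (by norm_num) (by norm_num)
        ?_ ?_⟩
    · rw [deriv_deriv_cube]
      exact fun a _ b _ hab => by linarith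
    · rw [deriv_deriv_RGH]
      exact fun a _ b _ hab => by dsimp only; gcongr
    · rw [deriv_deriv_RFH]; norm_num; linarith [le_abs_self t₀]
    · rw [deriv_deriv_RFH]; norm_num; linarith [neg_abs_le t₀]
end

section
/- Let W(k) denote the Weibull distribution function F_k(t) = 1 − exp(−t^k) on (0,∞) with shape k > 0. For 0 < k < ℓ with distribution functions F = F_k, G = F_ℓ, one has R_{FG}(t) = G^{-1}(F(t)) = t^{k/ℓ}. Consequently: (a) F ≤₃ G holds for all 0 < k < ℓ; (b) G ≤₃ F (hence F =₃ G) holds if and only if ℓ ≥ 2k. -/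
/-! With `p = k / ℓ ∈ (0, 1)` the function `R_{FG}` is `t ↦ t ^ p`, so
`R''' = p (p - 1) (p - 2) t ^ (p - 3)`, which is nonnegative, while
`3 R''² / R' = 3 p (p - 1)² t ^ (p - 3)`. The difference of the two coefficients is
`p (p - 1) (2p - 1)`, which is nonnegative exactly when `p ≤ 1/2`. -/

namespace Real

theorem deriv_deriv_rpow_const (p x : ℝ) :
    deriv (deriv fun x : ℝ => x ^ p) x = p * (p - 1) * x ^ (p - 2) := by
  simp only [deriv_rpow_const', deriv_const_mul_field', sub_sub, mul_assoc]
  norm_num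

theorem deriv_deriv_deriv_rpow_const (p x : ℝ) :
    deriv (deriv (deriv fun x : ℝ => x ^ p)) x = p * (p - 1) * (p - 2) * x ^ (p - 3) := by
  simp only [deriv_rpow_const', deriv_const_mul_field', sub_sub, mul_assoc]
  norm_num

theorem weibull_quantile_comp_cdf (k ℓ : ℝ) {t : ℝ} (ht : 0 ≤ t) :
    (-log (1 - (1 - exp (-(t ^ k))))) ^ (1 / ℓ) = t ^ (k / ℓ) := by
  rw [sub_sub_cancel, log_exp, neg_neg, ← rpow_mul ht, mul_one_div]

theorem deriv_deriv_deriv_rpow_const_nonneg {p t : ℝ} (hp₀ : 0 ≤ p) (hp₁ : p ≤ 1) (ht : 0 ≤ t) :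
    0 ≤ deriv (deriv (deriv fun x : ℝ => x ^ p)) t := by
  rw [deriv_deriv_deriv_rpow_const]
  have hcoef : 0 ≤ p * ((p - 1) * (p - 2)) :=
    mul_nonneg hp₀ (mul_nonneg_of_nonpos_of_nonpos (by linarith) (by linarith))
  exact mul_nonneg (by linarith) (rpow_nonneg ht _)

theorem three_mul_sq_deriv_deriv_div_deriv_rpow_const {p t : ℝ} (hp : p ≠ 0) (ht : 0 < t) :
    3 * deriv (deriv fun x : ℝ => x ^ p) t ^ 2 / deriv (fun x : ℝ => x ^ p) t
      = 3 * p * (p - 1) ^ 2 * t ^ (p - 3) := by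
  have hsq : t ^ (p - 2) * t ^ (p - 2) = t ^ (p - 3) * t ^ (p - 1) := by
    rw [← rpow_add ht, ← rpow_add ht]
    ring_nf
  rw [deriv_deriv_rpow_const, deriv_rpow_const, div_eq_iff (mul_ne_zero hp (rpow_pos_of_pos ht _).ne')]
  linear_combination (3 * p ^ 2 * (p - 1) ^ 2) * hsq

theorem deriv_deriv_deriv_rpow_const_le_iff {p t : ℝ} (hp₀ : 0 < p) (hp₁ : p < 1) (ht : 0 < t) :
    deriv (deriv (deriv fun x : ℝ => x ^ p)) t
        ≤ 3 * deriv (deriv fun x : ℝ => x ^ p) t ^ 2 / deriv (fun x : ℝ => x ^ p) t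
      ↔ 2 * p ≤ 1 := by
  rw [deriv_deriv_deriv_rpow_const, three_mul_sq_deriv_deriv_div_deriv_rpow_const hp₀.ne' ht,
    mul_le_mul_iff_left₀ (rpow_pos_of_pos ht _)]
  -- after cancelling `t ^ (p - 3)`, the two sides differ by `p (1 - p) (1 - 2p)`
  have hpos : 0 < p * (1 - p) := mul_pos hp₀ (by linarith)
  constructor
  · intro h
    nlinarith
  · intro h
    nlinarith

end Real

/-- For Weibull distributions `W(k)` with cdf
`F_k t = 1 - exp(-t^k)` on `(0,∞)` and `0 < k < ℓ` (with `F = F_k`,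
`G = F_ℓ`, `G⁻¹ p = (-log(1-p))^{1/ℓ}`): `R_{FG} t = G⁻¹(F t) = t^{k/ℓ}`;
(a) `F ≤₃ G` always holds; (b) `G ≤₃ F` (equivalently, together with (a),
`F =₃ G`) holds iff `ℓ ≥ 2k`. -/
theorem stmt12 (k ℓ : ℝ) (hk : 0 < k) (hkl : k < ℓ) :
    -- R_{FG}(t) = G⁻¹(F(t)) = t^{k/ℓ}
    (∀ t : ℝ, 0 < t →
      (-Real.log (1 - (1 - Real.exp (-(t ^ k))))) ^ (1/ℓ) = t ^ (k/ℓ)) ∧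
    -- (a) F ≤₃ G: R_{FG}''' ≥ 0 on (0,∞)
    (∀ t : ℝ, 0 < t →
      0 ≤ deriv (deriv (deriv (fun s : ℝ => s ^ (k/ℓ)))) t) ∧
    -- (b) G ≤₃ F ⟺ ℓ ≥ 2k
    ((∀ t : ℝ, 0 < t →
      deriv (deriv (deriv (fun s : ℝ => s ^ (k/ℓ)))) t
        ≤ 3 * (deriv (deriv (fun s : ℝ => s ^ (k/ℓ))) t)^2
            / deriv (fun s : ℝ => s ^ (k/ℓ)) t)
      ↔ 2*k ≤ ℓ) := by
  have hℓ : 0 < ℓ := hk.trans hkl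
  have hp₀ : 0 < k / ℓ := div_pos hk hℓ
  have hp₁ : k / ℓ < 1 := (div_lt_one hℓ).mpr hkl
  have h2p : 2 * (k / ℓ) ≤ 1 ↔ 2 * k ≤ ℓ := by
    rw [← mul_div_assoc, div_le_one hℓ]
  refine ⟨fun t ht => Real.weibull_quantile_comp_cdf k ℓ ht.le,
    fun t ht => Real.deriv_deriv_deriv_rpow_const_nonneg hp₀.le hp₁.le ht.le, ?_⟩
  rw [← h2p]
  exact ⟨fun h => (Real.deriv_deriv_deriv_rpow_const_le_iff hp₀ hp₁ one_pos).mp (h 1 one_pos),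
    fun h t ht => (Real.deriv_deriv_deriv_rpow_const_le_iff hp₀ hp₁ ht).mpr h⟩
end

section
/- Let ν ∈ ℝ and τ ≥ 2. Then the function R(t) = sinh(τ·arsinh(t) − ν) satisfies R'''(t) ≥ 0 for all t ∈ ℝ. Equivalently, [(τ²+2)t² + τ² − 1]·cosh(τ·arsinh(t) − ν) ≥ 3τ·t·√(1+t²)·sinh(τ·arsinh(t) − ν) for all t ∈ ℝ. -/
/-!
Write `S, C` for `sinh, cosh` of `τ·arsinh t − ν` and `q = √(1+t²)`.
Then `S' = τC/q`, `C' = τS/q`, `q' = t/q`, so `R' = τC/q`, `R'' = τ(τqS − tC)/q³`,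
and since `(τqS − tC)' = (τ²−1)C`,
`R''' = τ(P(t)·C − 3τtq·S)/q⁵` with `P(t) = (τ²+2)t² + τ² − 1`.
As `|S| ≤ C`, both claims follow from `|3τtq| ≤ P(t)`, which after squaring is
`P(t)² − 9τ²t²(1+t²) = (τ²−4)(τ²−1)t⁴ + (τ²−4)(2τ²+1)t² + (τ²−1)² ≥ 0`
for `τ ≥ 2`.
-/

open Real

lemma abs_sinh_le_cosh (x : ℝ) : |sinh x| ≤ cosh x := by
  rw [abs_sinh, ← cosh_abs x]
  exact (sinh_lt_cosh _).le

lemma mul_sinh_le_mul_cosh {a b : ℝ} (h : |a| ≤ b) (x : ℝ) : a * sinh x ≤ b * cosh x :=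
  calc a * sinh x ≤ |a| * |sinh x| := by rw [← abs_mul]; exact le_abs_self _
    _ ≤ b * cosh x := mul_le_mul h (abs_sinh_le_cosh x) (abs_nonneg _) ((abs_nonneg a).trans h)

lemma abs_three_mul_mul_sqrt_le {τ : ℝ} (hτ : 2 ≤ τ) (t : ℝ) :
    |3 * τ * t * √(1 + t ^ 2)| ≤ (τ ^ 2 + 2) * t ^ 2 + τ ^ 2 - 1 := by
  have h4 : 0 ≤ τ ^ 2 - 4 := by nlinarith
  have h1 : 0 ≤ τ ^ 2 - 1 := by linarith
  have hsq : (3 * τ * t * √(1 + t ^ 2)) ^ 2 = 9 * τ ^ 2 * t ^ 2 * (1 + t ^ 2) := by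
    rw [mul_pow, sq_sqrt (by positivity)]; ring
  have gap : ((τ ^ 2 + 2) * t ^ 2 + τ ^ 2 - 1) ^ 2 - 9 * τ ^ 2 * t ^ 2 * (1 + t ^ 2)
      = (τ ^ 2 - 4) * (τ ^ 2 - 1) * t ^ 4 + (τ ^ 2 - 4) * (2 * τ ^ 2 + 1) * t ^ 2
        + (τ ^ 2 - 1) ^ 2 := by ring
  refine abs_le_of_sq_le_sq ?_ (by nlinarith [sq_nonneg t, sq_nonneg (τ * t)])
  rw [hsq, ← sub_nonneg, gap]
  positivity

lemma sqrt_one_add_sq_pos (x : ℝ) : 0 < √(1 + x ^ 2) := sqrt_pos.2 (by positivity)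

lemma hasDerivAt_sqrt_one_add_sq (x : ℝ) :
    HasDerivAt (fun y : ℝ => √(1 + y ^ 2)) (x / √(1 + x ^ 2)) x := by
  convert ((hasDerivAt_pow 2 x).const_add 1).sqrt (by positivity) using 1
  field_simp
  ring

section
variable (τ ν : ℝ)

lemma hasDerivAt_sinh_mul_arsinh_sub (x : ℝ) :
    HasDerivAt (fun s => sinh (τ * arsinh s - ν))
      (τ * cosh (τ * arsinh x - ν) / √(1 + x ^ 2)) x := by
  convert (((hasDerivAt_arsinh x).const_mul τ).sub_const ν).sinh using 1
  ring

lemma hasDerivAt_cosh_mul_arsinh_sub (x : ℝ) :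
    HasDerivAt (fun s => cosh (τ * arsinh s - ν))
      (τ * sinh (τ * arsinh x - ν) / √(1 + x ^ 2)) x := by
  convert (((hasDerivAt_arsinh x).const_mul τ).sub_const ν).cosh using 1
  ring

lemma deriv_sinh_mul_arsinh_sub :
    deriv (fun s => sinh (τ * arsinh s - ν))
      = fun t => τ * cosh (τ * arsinh t - ν) / √(1 + t ^ 2) :=
  funext fun t => (hasDerivAt_sinh_mul_arsinh_sub τ ν t).deriv

lemma deriv_deriv_sinh_mul_arsinh_sub :
    deriv (deriv (fun s => sinh (τ * arsinh s - ν)))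
      = fun t => τ * (τ * √(1 + t ^ 2) * sinh (τ * arsinh t - ν)
          - t * cosh (τ * arsinh t - ν)) / √(1 + t ^ 2) ^ 3 := by
  rw [deriv_sinh_mul_arsinh_sub]
  refine funext fun t => HasDerivAt.deriv ?_
  have hq := sqrt_one_add_sq_pos t
  refine (((hasDerivAt_cosh_mul_arsinh_sub τ ν t).const_mul τ).div
    (hasDerivAt_sqrt_one_add_sq t) hq.ne').congr_deriv ?_
  field_simp

lemma hasDerivAt_mul_sqrt_mul_sinh_sub_mul_cosh (x : ℝ) :
    HasDerivAt
      (fun s => τ * √(1 + s ^ 2) * sinh (τ * arsinh s - ν) - s * cosh (τ * arsinh s - ν))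
      ((τ ^ 2 - 1) * cosh (τ * arsinh x - ν)) x := by
  refine ((((hasDerivAt_sqrt_one_add_sq x).const_mul τ).mul
    (hasDerivAt_sinh_mul_arsinh_sub τ ν x)).sub
    ((hasDerivAt_id' x).mul (hasDerivAt_cosh_mul_arsinh_sub τ ν x))).congr_deriv ?_
  field_simp
  ring

lemma deriv_deriv_deriv_sinh_mul_arsinh_sub (t : ℝ) :
    deriv (deriv (deriv (fun s => sinh (τ * arsinh s - ν)))) t
      = τ * (((τ ^ 2 + 2) * t ^ 2 + τ ^ 2 - 1) * cosh (τ * arsinh t - ν)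
          - 3 * τ * t * √(1 + t ^ 2) * sinh (τ * arsinh t - ν)) / √(1 + t ^ 2) ^ 5 := by
  rw [deriv_deriv_sinh_mul_arsinh_sub]
  refine HasDerivAt.deriv ?_
  have hq := sqrt_one_add_sq_pos t
  have hq2 : √(1 + t ^ 2) ^ 2 = 1 + t ^ 2 := sq_sqrt (by positivity)
  refine (((hasDerivAt_mul_sqrt_mul_sinh_sub_mul_cosh τ ν t).const_mul τ).div
    ((hasDerivAt_sqrt_one_add_sq t).pow 3) (pow_ne_zero 3 hq.ne')).congr_deriv ?_
  simp only [Pi.pow_apply]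
  field_simp
  rw [show √(1 + t ^ 2) ^ 4 = (√(1 + t ^ 2) ^ 2) ^ 2 by ring, hq2]
  ring
end

/-- For `ν ∈ ℝ` and `τ ≥ 2`, `R t = sinh(τ·arsinh t − ν)`
satisfies `R''' ≥ 0` everywhere; equivalently,
`[(τ²+2)t² + τ² − 1]·cosh(τ·arsinh t − ν) ≥ 3τt√(1+t²)·sinh(τ·arsinh t − ν)`
for all `t ∈ ℝ`. -/
theorem stmt17 (ν τ : ℝ) (hτ : 2 ≤ τ) :
    (∀ t : ℝ,
      0 ≤ deriv (deriv (deriv (fun s : ℝ => Real.sinh (τ * Real.arsinh s - ν)))) t) ∧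
    (∀ t : ℝ,
      3 * τ * t * Real.sqrt (1 + t^2) * Real.sinh (τ * Real.arsinh t - ν)
        ≤ ((τ^2 + 2) * t^2 + τ^2 - 1) * Real.cosh (τ * Real.arsinh t - ν)) := by
  have key : ∀ t : ℝ, 3 * τ * t * √(1 + t ^ 2) * sinh (τ * arsinh t - ν)
      ≤ ((τ ^ 2 + 2) * t ^ 2 + τ ^ 2 - 1) * cosh (τ * arsinh t - ν) :=
    fun t => mul_sinh_le_mul_cosh (abs_three_mul_mul_sqrt_le hτ t) _
  refine ⟨fun t => ?_, key⟩
  rw [deriv_deriv_deriv_sinh_mul_arsinh_sub]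
  have hτ0 : 0 ≤ τ := by linarith
  have := sub_nonneg.2 (key t)
  positivity
end

section
/- For sinh-arsinh distributions F = Φ∘S_{ν_F,τ_F} and G = Φ∘S_{ν_G,τ_G} (Φ the standard normal cdf), R_{FG}(t) = G^{-1}(F(t)) = S_{ν̃,τ̃}(t) where ν̃ = (ν_F − ν_G)/τ_G and τ̃ = τ_F/τ_G. In particular, whether F ≤₃ G holds depends only on ν̃ and τ̃. -/
/-- The sinh-arsinh transformation `S_{ν,τ} t = sinh(τ·arsinh t − ν)`. -/
noncomputable def SAS (ν τ : ℝ) (t : ℝ) : ℝ := Real.sinh (τ * Real.arsinh t - ν)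

lemma SAS_SAS (a b ν τ t : ℝ) : SAS a b (SAS ν τ t) = SAS (b * ν + a) (b * τ) t := by
  simp only [SAS, Real.arsinh_sinh]
  ring_nf

lemma SAS_zero_one (t : ℝ) : SAS 0 1 t = t := by
  simp [SAS]

lemma SAS_inv_SAS {ν τ : ℝ} (hτ : τ ≠ 0) (t : ℝ) : SAS (-(ν / τ)) (1 / τ) (SAS ν τ t) = t := by
  rw [SAS_SAS, one_div_mul_cancel hτ, one_div_mul_eq_div, add_neg_cancel, SAS_zero_one]

lemma SAS_inv_comp_SAS (νF τF νG τG t : ℝ) :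
    SAS (-(νG / τG)) (1 / τG) (SAS νF τF t) = SAS ((νF - νG) / τG) (τF / τG) t := by
  rw [SAS_SAS, one_div_mul_eq_div, one_div_mul_eq_div, ← sub_eq_add_neg, sub_div]

theorem stmt18_general (νF τF νG τG : ℝ) (hG : 0 < τG)
    (Φ Φinv : ℝ → ℝ) (hΦ : Function.LeftInverse Φinv Φ) :
    -- S_{ν,τ}⁻¹ = S_{−ν/τ,1/τ}
    (∀ t : ℝ, SAS (-(νG/τG)) (1/τG) (SAS νG τG t) = t) ∧
    -- R_{FG}(t) = G⁻¹(F(t)) = S_{ν̃,τ̃}(t)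
    (∀ t : ℝ,
      (SAS (-(νG/τG)) (1/τG) ∘ Φinv) ((Φ ∘ SAS νF τF) t)
        = SAS ((νF - νG)/τG) (τF/τG) t) ∧
    -- in particular, F ≤₃ G depends only on ν̃ and τ̃
    ((∀ t : ℝ, 0 ≤ deriv (deriv (deriv
        (SAS (-(νG/τG)) (1/τG) ∘ Φinv ∘ Φ ∘ SAS νF τF))) t) ↔
      (∀ t : ℝ, 0 ≤ deriv (deriv (deriv
        (SAS ((νF - νG)/τG) (τF/τG)))) t)) := by
  have hR : SAS (-(νG/τG)) (1/τG) ∘ Φinv ∘ Φ ∘ SAS νF τF = SAS ((νF - νG)/τG) (τF/τG) :=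
    funext fun t => by
      simp only [Function.comp_apply, hΦ (SAS νF τF t), SAS_inv_comp_SAS]
  exact ⟨SAS_inv_SAS hG.ne', fun t => congrFun hR t, by rw [hR]⟩

/-- For sinh-arsinh distributions `F = Φ ∘ S_{ν_F,τ_F}` and
`G = Φ ∘ S_{ν_G,τ_G}` (with `Φ` the base cdf, e.g. the standard normal, and
`Φ⁻¹ ∘ Φ = id`): `S_{ν,τ}⁻¹ = S_{−ν/τ, 1/τ}`, and
`R_{FG} = G⁻¹ ∘ F = S_{ν̃,τ̃}` with `ν̃ = (ν_F − ν_G)/τ_G`, `τ̃ = τ_F/τ_G`.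
In particular whether `F ≤₃ G` holds depends only on `ν̃` and `τ̃`. -/
theorem stmt18 (νF τF νG τG : ℝ) (hF : 0 < τF) (hG : 0 < τG)
    (Φ Φinv : ℝ → ℝ) (hΦ : Function.LeftInverse Φinv Φ) :
    -- S_{ν,τ}⁻¹ = S_{−ν/τ,1/τ}
    (∀ t : ℝ, SAS (-(νG/τG)) (1/τG) (SAS νG τG t) = t) ∧
    -- R_{FG}(t) = G⁻¹(F(t)) = S_{ν̃,τ̃}(t)
    (∀ t : ℝ,
      (SAS (-(νG/τG)) (1/τG) ∘ Φinv) ((Φ ∘ SAS νF τF) t)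
        = SAS ((νF - νG)/τG) (τF/τG) t) ∧
    -- in particular, F ≤₃ G depends only on ν̃ and τ̃
    ((∀ t : ℝ, 0 ≤ deriv (deriv (deriv
        (SAS (-(νG/τG)) (1/τG) ∘ Φinv ∘ Φ ∘ SAS νF τF))) t) ↔
      (∀ t : ℝ, 0 ≤ deriv (deriv (deriv
        (SAS ((νF - νG)/τG) (τF/τG)))) t)) :=
  stmt18_general νF τF νG τG hG Φ Φinv hΦ
end
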